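/- In the grid graph G = P_s □ P_t with s, t ≥ 2, for any two distinct vertices x and y, the set of distinctive vertices satisfies |D(x,y)| ≥ s + t − 2. -/

import Mathlib

/-!
In the grid, `d((i, j), (g, h)) = |i - g| + |j - h|`. If `x` and `y` differ in both coordinates,
then for every second coordinate `v` one of `(x.1, v)`, `(y.1, v)` distinguishes them, and for every
first coordinate `u ∉ {x.1, y.1}` one of `(u, x.2)`, `(u, y.2)` does: that is `t + (s - 2)`
distinct vertices. If `x.1 = y.1`, then `D(x, y) = P_s × D(x.2, y.2)`, and two distinct vertices of a
path are distinguished by every vertex except possibly their midpoint, so `|D(x, y)| ≥ s (t - 1)`.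
-/

open Finset

namespace SimpleGraph

section distinctive

variable {V : Type*} [Fintype V] (G : SimpleGraph V)

noncomputable def distinctiveVertices (x y : V) : Finset V :=
  {z | G.dist x z ≠ G.dist y z}

variable {G}

@[simp]
lemma mem_distinctiveVertices {x y z : V} :
    z ∈ G.distinctiveVertices x y ↔ G.dist x z ≠ G.dist y z := by
  simp [distinctiveVertices]

end distinctive

section boxProd

variable {α β : Type*} {G : SimpleGraph α} {H : SimpleGraph β}

lemma dist_boxProd (hG : G.Preconnected) (hH : H.Preconnected) (x y : α × β) :
    (G □ H).dist x y = G.dist x.1 y.1 + H.dist x.2 y.2 := by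
  rw [dist, dist, dist, edist_boxProd]
  exact ENat.toNat_add (edist_ne_top_iff_reachable.2 (hG _ _))
    (edist_ne_top_iff_reachable.2 (hH _ _))

variable [Fintype α] [Fintype β] (hG : G.Preconnected) (hH : H.Preconnected)
include hG hH

lemma distinctiveVertices_boxProd_of_fst_eq {x y : α × β} (h : x.1 = y.1) :
    (G □ H).distinctiveVertices x y = univ ×ˢ H.distinctiveVertices x.2 y.2 := by
  ext z
  simp [dist_boxProd hG hH, h]

lemma distinctiveVertices_boxProd_of_snd_eq {x y : α × β} (h : x.2 = y.2) :
    (G □ H).distinctiveVertices x y = G.distinctiveVertices x.1 y.1 ×ˢ univ := by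
  ext z
  simp [dist_boxProd hG hH, h]

/-- Equality at both `(x.1, v)` and `(y.1, v)` would force `G.dist x.1 y.1 = 0`. -/
lemma mk_mem_distinctiveVertices_boxProd_of_fst_ne {x y : α × β} (h : x.1 ≠ y.1) (v : β) :
    (x.1, v) ∈ (G □ H).distinctiveVertices x y ∨ (y.1, v) ∈ (G □ H).distinctiveVertices x y := by
  have hpos := (hG x.1 y.1).pos_dist_of_ne h
  simp only [mem_distinctiveVertices, dist_boxProd hG hH, dist_self, dist_comm (u := y.1)]
  omega

lemma mk_mem_distinctiveVertices_boxProd_of_snd_ne {x y : α × β} (h : x.2 ≠ y.2) (u : α) :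
    (u, x.2) ∈ (G □ H).distinctiveVertices x y ∨ (u, y.2) ∈ (G □ H).distinctiveVertices x y := by
  have hpos := (hH x.2 y.2).pos_dist_of_ne h
  simp only [mem_distinctiveVertices, dist_boxProd hG hH, dist_self, dist_comm (u := y.2)]
  omega

lemma card_add_card_sub_two_le_card_distinctiveVertices_boxProd {x y : α × β}
    (h₁ : x.1 ≠ y.1) (h₂ : x.2 ≠ y.2) :
    Fintype.card α + Fintype.card β - 2 ≤ #((G □ H).distinctiveVertices x y) := by
  classical
  set D := (G □ H).distinctiveVertices x y
  set A : Finset α := {x.1, y.1}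
  have hrows : Fintype.card β ≤ #{z ∈ D | z.1 ∈ A} := by
    refine card_le_card_of_surjOn Prod.snd fun v _ => ?_
    rcases mk_mem_distinctiveVertices_boxProd_of_fst_ne hG hH h₁ v with hv | hv
    · exact ⟨(x.1, v), mem_filter.2 ⟨hv, by simp [A]⟩, rfl⟩
    · exact ⟨(y.1, v), mem_filter.2 ⟨hv, by simp [A]⟩, rfl⟩
  have hcols : Fintype.card α - 2 ≤ #{z ∈ D | z.1 ∉ A} := calc
    Fintype.card α - 2 ≤ #(univ \ A) := by
      have hsdiff := le_card_sdiff A univ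
      have hA : #A ≤ 2 := card_le_two
      rw [card_univ] at hsdiff
      omega
    _ ≤ #{z ∈ D | z.1 ∉ A} := by
      refine card_le_card_of_surjOn Prod.fst fun u hu => ?_
      have hu : u ∉ A := by simpa using hu
      rcases mk_mem_distinctiveVertices_boxProd_of_snd_ne hG hH h₂ u with hu' | hu'
      · exact ⟨(u, x.2), mem_filter.2 ⟨hu', hu⟩, rfl⟩
      · exact ⟨(u, y.2), mem_filter.2 ⟨hu', hu⟩, rfl⟩
  rw [← card_filter_add_card_filter_not (s := D) (fun z => z.1 ∈ A)]
  omega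

end boxProd

section pathGraph

variable {n : ℕ}

lemma Walk.natDist_le_length_of_pathGraph {i j : Fin n} (w : (pathGraph n).Walk i j) :
    Nat.dist i j ≤ w.length := by
  induction w with
  | nil => simp
  | cons h _ ih =>
    rw [pathGraph_adj] at h
    rw [Walk.length_cons]
    simp only [Nat.dist] at ih ⊢
    omega

lemma exists_walk_pathGraph_length_eq (d : ℕ) {i j : Fin n} (h : (j : ℕ) = i + d) :
    ∃ w : (pathGraph n).Walk i j, w.length = d := by
  induction d generalizing i with
  | zero =>
    obtain rfl : j = i := Fin.ext h
    exact ⟨.nil, rfl⟩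
  | succ d ih =>
    obtain ⟨w, hw⟩ := ih (i := ⟨i + 1, by omega⟩) (by simp only; omega)
    exact ⟨.cons (pathGraph_adj.2 (Or.inl rfl)) w, by simp [hw]⟩

lemma dist_pathGraph (i j : Fin n) : (pathGraph n).dist i j = Nat.dist i j := by
  obtain ⟨w, hw⟩ := (pathGraph_preconnected n i j).exists_walk_length_eq_dist
  refine le_antisymm ?_ (hw ▸ w.natDist_le_length_of_pathGraph)
  rcases le_total (i : ℕ) j with hij | hji
  · obtain ⟨w', hw'⟩ := exists_walk_pathGraph_length_eq (j - i) (i := i) (j := j) (by omega)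
    exact (dist_le w').trans (by simp only [hw', Nat.dist]; omega)
  · obtain ⟨w', hw'⟩ := exists_walk_pathGraph_length_eq (i - j) (i := j) (j := i) (by omega)
    exact (dist_le w'.reverse).trans (by simp only [Walk.length_reverse, hw', Nat.dist]; omega)

lemma sub_one_le_card_distinctiveVertices_pathGraph {i j : Fin n} (h : i ≠ j) :
    n - 1 ≤ #((pathGraph n).distinctiveVertices i j) := by
  have hmid : #{k : Fin n | (pathGraph n).dist i k = (pathGraph n).dist j k} ≤ 1 := by
    refine card_le_one.2 fun k hk l hl => ?_
    simp only [mem_filter, mem_univ, true_and, dist_pathGraph, Nat.dist] at hk hl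
    have hij : (i : ℕ) ≠ j := Fin.val_ne_of_ne h
    exact Fin.ext (by omega)
  have hsplit := card_filter_add_card_filter_not (s := univ)
    fun k : Fin n => (pathGraph n).dist i k = (pathGraph n).dist j k
  rw [card_univ, Fintype.card_fin] at hsplit
  simp only [distinctiveVertices, ne_eq]
  omega

end pathGraph

end SimpleGraph

open SimpleGraph

theorem grid_distinctive_lower_bound_general (s t : ℕ)
    (x y : Fin s × Fin t) (hxy : x ≠ y) :
    s + t - 2 ≤
      (Finset.univ.filter (fun z : Fin s × Fin t =>
        ((SimpleGraph.pathGraph s).boxProd (SimpleGraph.pathGraph t)).dist x z ≠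
          ((SimpleGraph.pathGraph s).boxProd (SimpleGraph.pathGraph t)).dist y z)).card := by
  change s + t - 2 ≤ #((pathGraph s □ pathGraph t).distinctiveVertices x y)
  have hP := pathGraph_preconnected
  rcases eq_or_ne x.1 y.1 with h₁ | h₁
  · have h₂ : x.2 ≠ y.2 := fun h₂ => hxy (Prod.ext h₁ h₂)
    have hD := sub_one_le_card_distinctiveVertices_pathGraph h₂
    have ht : 2 ≤ t := by have := Fin.val_ne_of_ne h₂; omega
    rw [distinctiveVertices_boxProd_of_fst_eq (hP s) (hP t) h₁, card_product, card_univ,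
      Fintype.card_fin]
    exact le_trans (by omega) (Nat.add_sub_one_le_mul (Fin.pos x.1).ne' (by omega))
  rcases eq_or_ne x.2 y.2 with h₂ | h₂
  · have hD := sub_one_le_card_distinctiveVertices_pathGraph h₁
    have hs : 2 ≤ s := by have := Fin.val_ne_of_ne h₁; omega
    rw [distinctiveVertices_boxProd_of_snd_eq (hP s) (hP t) h₂, card_product, card_univ,
      Fintype.card_fin]
    exact le_trans (by omega) (Nat.add_sub_one_le_mul (by omega) (Fin.pos x.2).ne')
  simpa using card_add_card_sub_two_le_card_distinctiveVertices_boxProd (hP s) (hP t) h₁ h₂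

/-- In the grid graph `P_s □ P_t` (`s, t ≥ 2`), any two distinct vertices have at least
`s + t - 2` distinctive vertices. -/
theorem grid_distinctive_lower_bound (s t : ℕ) (hs : 2 ≤ s) (ht : 2 ≤ t)
    (x y : Fin s × Fin t) (hxy : x ≠ y) :
    s + t - 2 ≤
      (Finset.univ.filter (fun z : Fin s × Fin t =>
        ((SimpleGraph.pathGraph s).boxProd (SimpleGraph.pathGraph t)).dist x z ≠
          ((SimpleGraph.pathGraph s).boxProd (SimpleGraph.pathGraph t)).dist y z)).card :=
  grid_distinctive_lower_bound_general s t x y hxy
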